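/- arXiv:1604.05345 — 8 statements merged into one kernel-verified Lean document; each statement's English description precedes it below -/
import Mathlib

section
/- For every integer n ≥ 2 with binary expansion n = Σ_{i=a}^{e} n_i·2^i (n_a ≠ 0 ≠ n_e), the number of triples (j,k,ℓ) with j ≥ 1, k ≥ 0, ℓ ≥ 2j, and n = 2^{2j−2} + k·2^{2j} + 2^ℓ equals e − 2j + 1 when a = 2j−2 is even, n_{a+1} = 0, and n is not a power of 2; otherwise it equals 0. -/
/-!
Writing `j = b + 1` and `ℓ = 2b + 2 + t`, the equation reads `n = 2^(2b) + m * 2^(2b+2)` with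
`m = k + 2^t`. Since `2^a + m * 2^(a+2) = 2^a * (4m + 1)`, such a representation determines
`a = v₂(n)` and `m`; it exists with `m ≠ 0` exactly when bit `a + 1` of `n` vanishes and `n` is
not a power of two. The triples are then indexed by the `t` with `2^t ≤ m`, i.e. `t ≤ log₂ m`,
and `log₂ n = a + 2 + log₂ m`.
-/

open Classical

def powerTriples (n : ℕ) : Set (ℕ × ℕ × ℕ) :=
  {p | 1 ≤ p.1 ∧ 2 * p.1 ≤ p.2.2 ∧
    n = 2 ^ (2 * p.1 - 2) + p.2.1 * 2 ^ (2 * p.1) + 2 ^ p.2.2}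

namespace Nat

lemma testBit_two_pow_mul_succ (a x : ℕ) :
    (2 ^ a * x).testBit (a + 1) = decide (x / 2 % 2 = 1) := by
  rw [testBit_two_pow_mul, Nat.add_sub_cancel_left, testBit_eq_decide_div_mod_eq, pow_one]
  simp

lemma two_pow_add_mul_two_pow_eq (a m : ℕ) :
    2 ^ a + m * 2 ^ (a + 2) = 2 ^ a * (4 * m + 1) := by
  ring

lemma padicValNat_two_pow_add_mul_two_pow (a m : ℕ) :
    padicValNat 2 (2 ^ a + m * 2 ^ (a + 2)) = a := by
  rw [two_pow_add_mul_two_pow_eq, padicValNat.mul (by positivity) (by omega),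
    padicValNat.prime_pow, padicValNat.eq_zero_of_not_dvd (by omega), add_zero]

lemma testBit_two_pow_add_mul_two_pow (a m : ℕ) :
    (2 ^ a + m * 2 ^ (a + 2)).testBit (a + 1) = false := by
  rw [two_pow_add_mul_two_pow_eq, testBit_two_pow_mul_succ, decide_eq_false_iff_not]
  omega

lemma two_pow_add_mul_two_pow_ne_two_pow (a : ℕ) {m : ℕ} (hm : m ≠ 0) (c : ℕ) :
    2 ^ a + m * 2 ^ (a + 2) ≠ 2 ^ c := by
  intro h
  have hac : a = c := by
    rw [← padicValNat_two_pow_add_mul_two_pow a m, h, padicValNat.prime_pow]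
  subst hac
  have : 0 < m * 2 ^ (a + 2) := by positivity
  omega

lemma log_two_two_pow_add_mul_two_pow (a : ℕ) {m : ℕ} (hm : m ≠ 0) :
    log 2 (2 ^ a + m * 2 ^ (a + 2)) = a + 2 + log 2 m := by
  have hle : 2 ^ log 2 m ≤ m := pow_log_le_self 2 hm
  have hlt : m < 2 ^ (log 2 m + 1) := lt_pow_succ_log_self one_lt_two m
  have ha : 2 ^ a < 2 ^ (a + 2) := pow_lt_pow_right₀ one_lt_two (by omega)
  apply log_eq_of_pow_le_of_lt_pow
  · calc 2 ^ (a + 2 + log 2 m) = 2 ^ log 2 m * 2 ^ (a + 2) := by ring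
      _ ≤ m * 2 ^ (a + 2) := Nat.mul_le_mul_right _ hle
      _ ≤ 2 ^ a + m * 2 ^ (a + 2) := le_add_self
  · calc 2 ^ a + m * 2 ^ (a + 2) < (m + 1) * 2 ^ (a + 2) := by linarith
      _ ≤ 2 ^ (log 2 m + 1) * 2 ^ (a + 2) := Nat.mul_le_mul_right _ hlt
      _ = 2 ^ (a + 2 + log 2 m + 1) := by ring

lemma two_pow_add_mul_two_pow_inj {a b m k : ℕ}
    (h : 2 ^ a + m * 2 ^ (a + 2) = 2 ^ b + k * 2 ^ (b + 2)) : a = b ∧ m = k := by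
  have hab : a = b := by
    rw [← padicValNat_two_pow_add_mul_two_pow a m, h, padicValNat_two_pow_add_mul_two_pow]
  subst hab
  exact ⟨rfl, Nat.eq_of_mul_eq_mul_right (by positivity) (Nat.add_left_cancel h)⟩

lemma exists_eq_two_pow_add_mul_two_pow {n : ℕ} (hn : n ≠ 0)
    (h : n.testBit (padicValNat 2 n + 1) = false) :
    ∃ m, n = 2 ^ padicValNat 2 n + m * 2 ^ (padicValNat 2 n + 2) := by
  obtain ⟨u, hu⟩ : 2 ^ padicValNat 2 n ∣ n := pow_padicValNat_dvd
  have hodd : ¬ 2 ∣ u := by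
    rintro ⟨v, rfl⟩
    exact pow_succ_padicValNat_not_dvd (p := 2) hn ⟨v, hu.trans (by ring)⟩
  generalize padicValNat 2 n = a at h hu ⊢
  subst hu
  rw [testBit_two_pow_mul_succ, decide_eq_false_iff_not] at h
  refine ⟨u / 4, ?_⟩
  rw [two_pow_add_mul_two_pow_eq]
  congr 1
  omega

end Nat

open Nat

lemma powerTriples_sum_eq (c k t : ℕ) :
    2 ^ (2 * (c + 1) - 2) + k * 2 ^ (2 * (c + 1)) + 2 ^ (2 * c + 2 + t) =
      2 ^ (2 * c) + (k + 2 ^ t) * 2 ^ (2 * c + 2) := by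
  rw [show 2 * (c + 1) - 2 = 2 * c by omega]
  ring

lemma exists_of_mem_powerTriples {n : ℕ} {p : ℕ × ℕ × ℕ} (hp : p ∈ powerTriples n) :
    ∃ b m, m ≠ 0 ∧ n = 2 ^ (2 * b) + m * 2 ^ (2 * b + 2) := by
  obtain ⟨j, k, ℓ⟩ := p
  obtain ⟨hj, hℓ, h⟩ :
      1 ≤ j ∧ 2 * j ≤ ℓ ∧ n = 2 ^ (2 * j - 2) + k * 2 ^ (2 * j) + 2 ^ ℓ := hp
  obtain ⟨c, rfl⟩ : ∃ c, j = c + 1 := ⟨j - 1, by omega⟩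
  obtain ⟨t, rfl⟩ : ∃ t, ℓ = 2 * c + 2 + t := ⟨ℓ - (2 * c + 2), by omega⟩
  exact ⟨c, k + 2 ^ t, by positivity, h.trans (powerTriples_sum_eq c k t)⟩

lemma powerTriples_two_pow_add_mul_two_pow (b m : ℕ) :
    powerTriples (2 ^ (2 * b) + m * 2 ^ (2 * b + 2)) =
      (fun t => (b + 1, m - 2 ^ t, 2 * b + 2 + t)) '' {t | 2 ^ t ≤ m} := by
  ext ⟨j, k, ℓ⟩
  simp only [powerTriples, Set.mem_ofPred_eq, Set.mem_image, Prod.mk.injEq]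
  constructor
  · rintro ⟨hj, hℓ, h⟩
    obtain ⟨c, rfl⟩ : ∃ c, j = c + 1 := ⟨j - 1, by omega⟩
    obtain ⟨t, rfl⟩ : ∃ t, ℓ = 2 * c + 2 + t := ⟨ℓ - (2 * c + 2), by omega⟩
    obtain ⟨hbc, rfl⟩ := two_pow_add_mul_two_pow_inj (h.trans (powerTriples_sum_eq c k t))
    exact ⟨t, le_add_self, by omega, by omega, by omega⟩
  · rintro ⟨t, ht, rfl, rfl, rfl⟩
    refine ⟨by omega, by omega, ?_⟩
    rw [powerTriples_sum_eq, Nat.sub_add_cancel ht]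

lemma ncard_powerTriples_two_pow_add_mul_two_pow (b : ℕ) {m : ℕ} (hm : m ≠ 0) :
    (powerTriples (2 ^ (2 * b) + m * 2 ^ (2 * b + 2))).ncard = log 2 m + 1 := by
  have hlog : {t | 2 ^ t ≤ m} = Set.Iic (log 2 m) := by
    ext t; exact (le_log_iff_pow_le one_lt_two hm).symm
  rw [powerTriples_two_pow_add_mul_two_pow, hlog,
    Set.ncard_image_of_injective _ fun s t h => by simp only [Prod.mk.injEq] at h; omega,
    Set.ncard_Iic_nat]

/-- Lemma S2: count of triples (j,k,ℓ) with j ≥ 1, k ≥ 0, ℓ ≥ 2j and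
n = 2^{2j−2} + k·2^{2j} + 2^ℓ. -/
theorem stmt1 (n : ℕ) (hn : 2 ≤ n) :
    ({p : ℕ × ℕ × ℕ | 1 ≤ p.1 ∧ 2 * p.1 ≤ p.2.2 ∧
        n = 2 ^ (2 * p.1 - 2) + p.2.1 * 2 ^ (2 * p.1) + 2 ^ p.2.2}.ncard : ℤ) =
      if padicValNat 2 n % 2 = 0 ∧ n.testBit (padicValNat 2 n + 1) = false ∧
          ¬∃ c : ℕ, n = 2 ^ c then
        (Nat.log 2 n : ℤ) - padicValNat 2 n - 1
      else 0 := by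
  change ((powerTriples n).ncard : ℤ) = _
  split_ifs with hcond
  · obtain ⟨heven, hbit, hpow⟩ := hcond
    obtain ⟨m, hnm⟩ := exists_eq_two_pow_add_mul_two_pow (by omega) hbit
    have hm : m ≠ 0 := fun h => hpow ⟨_, by simpa [h] using hnm⟩
    obtain ⟨b, hb⟩ : ∃ b, padicValNat 2 n = 2 * b := ⟨padicValNat 2 n / 2, by omega⟩
    rw [hb] at hnm
    rw [hnm, ncard_powerTriples_two_pow_add_mul_two_pow b hm,
      log_two_two_pow_add_mul_two_pow _ hm, padicValNat_two_pow_add_mul_two_pow]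
    push_cast
    ring
  · have hempty : powerTriples n = ∅ := Set.eq_empty_of_forall_notMem fun p hp => by
      obtain ⟨b, m, hm, rfl⟩ := exists_of_mem_powerTriples hp
      rw [padicValNat_two_pow_add_mul_two_pow] at hcond
      exact hcond ⟨by omega, testBit_two_pow_add_mul_two_pow _ _,
        fun ⟨c, hc⟩ => two_pow_add_mul_two_pow_ne_two_pow _ hm c hc⟩
    rw [hempty, Set.ncard_empty, Nat.cast_zero]
end

section
/- For every integer n ≥ 2 with binary expansion n = Σ_{i=a}^{e} n_i·2^i (n_a ≠ 0 ≠ n_e), the number of triples (j,k,ℓ) with j ≥ 1, k ≥ 0, ℓ ≥ 2j, and n = 2^{2j−2} + 2^{2j−1} + k·2^{2j} + 2^ℓ equals e − 2j + 1 when a = 2j−2 is even and n_{a+1} = 1; otherwise it equals 0. -/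
/-!
Factoring out `2 ^ (2j - 2)`, a triple `(j, k, ℓ)` represents `n` exactly when
`n = 2 ^ (2j - 2) * (4m + 3)` with `m = k + 2 ^ (ℓ - 2j)`. Since `4m + 3` is odd, such a
factorisation of `n` is unique: it exists iff `v₂(n)` is even and bit `v₂(n) + 1` of `n` is set,
and then `j` and `m` are determined by `n`, while the triples correspond to the exponents `t` with
`2 ^ t ≤ m`, i.e. with `2 ^ (2j + t) ≤ n`. There are `⌊log₂ n⌋ - 2j + 1` of them.
-/

open Nat

def reprTriples (n : ℕ) : Set (ℕ × ℕ × ℕ) :=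
  {p | 1 ≤ p.1 ∧ 2 * p.1 ≤ p.2.2 ∧
    n = 2 ^ (2 * p.1 - 2) + 2 ^ (2 * p.1 - 1) + p.2.1 * 2 ^ (2 * p.1) + 2 ^ p.2.2}

lemma repr_eq_two_pow_mul_four_mul_add_three (i k t : ℕ) :
    2 ^ (2 * (i + 1) - 2) + 2 ^ (2 * (i + 1) - 1) + k * 2 ^ (2 * (i + 1))
        + 2 ^ (2 * i + 2 + t) = 2 ^ (2 * i) * (4 * (k + 2 ^ t) + 3) := by
  rw [show 2 * (i + 1) - 2 = 2 * i by omega, show 2 * (i + 1) - 1 = 2 * i + 1 by omega]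
  ring

lemma padicValNat_two_pow_mul_of_odd {a u : ℕ} (hu : Odd u) : padicValNat 2 (2 ^ a * u) = a := by
  have : Fact (Nat.Prime 2) := ⟨Nat.prime_two⟩
  rw [padicValNat.mul (by positivity) hu.pos.ne', padicValNat.prime_pow,
    padicValNat.eq_zero_of_not_dvd hu.not_two_dvd_nat, add_zero]

lemma odd_four_mul_add_three (m : ℕ) : Odd (4 * m + 3) := ⟨2 * m + 1, by ring⟩

lemma eq_of_two_pow_mul_four_mul_add_three_eq {i i' m m' : ℕ}
    (h : 2 ^ (2 * i) * (4 * m + 3) = 2 ^ (2 * i') * (4 * m' + 3)) : i = i' ∧ m = m' := by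
  have hi : 2 * i = 2 * i' := by
    simpa only [padicValNat_two_pow_mul_of_odd (odd_four_mul_add_three _)] using
      congrArg (padicValNat 2) h
  rw [hi] at h
  have := Nat.eq_of_mul_eq_mul_left (by positivity) h
  omega

lemma padicValNat_even_and_testBit_iff {n : ℕ} :
    (padicValNat 2 n % 2 = 0 ∧ n.testBit (padicValNat 2 n + 1) = true) ↔
      ∃ i m, n = 2 ^ (2 * i) * (4 * m + 3) := by
  constructor
  · rintro ⟨heven, hbit⟩
    have hn : n ≠ 0 := by rintro rfl; simp at hbit
    obtain ⟨a, u, hu, rfl⟩ := exists_eq_two_pow_mul_odd hn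
    rw [padicValNat_two_pow_mul_of_odd hu] at heven hbit
    rw [testBit_two_pow_mul, add_tsub_cancel_left, testBit_eq_decide_div_mod_eq] at hbit
    simp only [Bool.and_eq_true, decide_eq_true_eq, pow_one] at hbit
    obtain ⟨u', rfl⟩ := hu
    refine ⟨a / 2, u' / 2, ?_⟩
    rw [show 2 * (a / 2) = a by omega, show 4 * (u' / 2) + 3 = 2 * u' + 1 by omega]
  · rintro ⟨i, m, rfl⟩
    rw [padicValNat_two_pow_mul_of_odd (odd_four_mul_add_three m), testBit_two_pow_mul,
      add_tsub_cancel_left, testBit_eq_decide_div_mod_eq]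
    simp only [Bool.and_eq_true, decide_eq_true_eq, pow_one]
    omega

lemma reprTriples_eq_empty {n : ℕ} (hn : ¬∃ i m, n = 2 ^ (2 * i) * (4 * m + 3)) :
    reprTriples n = ∅ := by
  refine Set.eq_empty_of_forall_notMem fun ⟨j, k, ℓ⟩ hmem => hn ?_
  obtain ⟨hj, hℓ, hrepr⟩ := hmem
  dsimp only at hj hℓ hrepr
  obtain ⟨i, rfl⟩ : ∃ i, j = i + 1 := ⟨j - 1, by omega⟩
  obtain ⟨t, rfl⟩ : ∃ t, ℓ = 2 * i + 2 + t := ⟨ℓ - (2 * i + 2), by omega⟩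
  exact ⟨i, k + 2 ^ t, by rw [hrepr, repr_eq_two_pow_mul_four_mul_add_three]⟩

lemma reprTriples_two_pow_mul_four_mul_add_three (i m : ℕ) :
    reprTriples (2 ^ (2 * i) * (4 * m + 3)) =
      (fun t => (i + 1, m - 2 ^ t, 2 * i + 2 + t)) '' {t | 2 ^ t ≤ m} := by
  ext ⟨j, k, ℓ⟩
  simp only [reprTriples, Set.mem_ofPred_eq, Set.mem_image, Prod.mk.injEq]
  constructor
  · rintro ⟨hj, hℓ, hrepr⟩
    obtain ⟨i', rfl⟩ : ∃ i', j = i' + 1 := ⟨j - 1, by omega⟩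
    obtain ⟨t, rfl⟩ : ∃ t, ℓ = 2 * i' + 2 + t := ⟨ℓ - (2 * i' + 2), by omega⟩
    rw [repr_eq_two_pow_mul_four_mul_add_three] at hrepr
    obtain ⟨rfl, rfl⟩ := eq_of_two_pow_mul_four_mul_add_three_eq hrepr
    exact ⟨t, by omega, rfl, by omega, rfl⟩
  · rintro ⟨t, ht, rfl, rfl, rfl⟩
    refine ⟨by omega, by omega, ?_⟩
    rw [repr_eq_two_pow_mul_four_mul_add_three, Nat.sub_add_cancel ht]

lemma two_pow_le_iff_two_pow_le_two_pow_mul (a m t : ℕ) :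
    2 ^ t ≤ m ↔ 2 ^ (a + 2 + t) ≤ 2 ^ a * (4 * m + 3) := by
  rw [show 2 ^ (a + 2 + t) = 2 ^ a * (4 * 2 ^ t) by ring,
    Nat.mul_le_mul_left_iff (by positivity)]
  omega

lemma ncard_reprTriples_two_pow_mul_add (i m : ℕ) :
    (reprTriples (2 ^ (2 * i) * (4 * m + 3))).ncard + (2 * i + 1) =
      Nat.log 2 (2 ^ (2 * i) * (4 * m + 3)) := by
  set n := 2 ^ (2 * i) * (4 * m + 3)
  have hn : n ≠ 0 := by positivity
  have hlog : 2 * i + 1 ≤ Nat.log 2 n :=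
    le_log_of_pow_le one_lt_two (by rw [pow_succ]; unfold n; gcongr; omega)
  have hset : {t | 2 ^ t ≤ m} = Set.Iio (Nat.log 2 n - (2 * i + 1)) := by
    ext t
    rw [Set.mem_ofPred_eq, two_pow_le_iff_two_pow_le_two_pow_mul (2 * i),
      ← le_log_iff_pow_le one_lt_two hn, Set.mem_Iio]
    omega
  rw [reprTriples_two_pow_mul_four_mul_add_three,
    Set.ncard_image_of_injective _ fun s t hst => by simpa using congrArg (·.2.2) hst, hset,
    ← Finset.coe_Iio, Set.ncard_coe_finset, Nat.card_Iio]
  omega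

theorem stmt2_general (n : ℕ) :
    ({p : ℕ × ℕ × ℕ | 1 ≤ p.1 ∧ 2 * p.1 ≤ p.2.2 ∧
        n = 2 ^ (2 * p.1 - 2) + 2 ^ (2 * p.1 - 1) + p.2.1 * 2 ^ (2 * p.1)
            + 2 ^ p.2.2}.ncard : ℤ) =
      if padicValNat 2 n % 2 = 0 ∧ n.testBit (padicValNat 2 n + 1) = true then
        (Nat.log 2 n : ℤ) - padicValNat 2 n - 1
      else 0 := by
  change ((reprTriples n).ncard : ℤ) = _
  split_ifs with h
  · obtain ⟨i, m, rfl⟩ := padicValNat_even_and_testBit_iff.mp h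
    rw [padicValNat_two_pow_mul_of_odd (odd_four_mul_add_three m),
      ← ncard_reprTriples_two_pow_mul_add]
    push_cast
    ring
  · rw [reprTriples_eq_empty (mt padicValNat_even_and_testBit_iff.mpr h), Set.ncard_empty,
      Nat.cast_zero]

/-- Lemma S3: count of triples (j,k,ℓ) with j ≥ 1, k ≥ 0, ℓ ≥ 2j and
n = 2^{2j−2} + 2^{2j−1} + k·2^{2j} + 2^ℓ. -/
theorem stmt2 (n : ℕ) (hn : 2 ≤ n) :
    ({p : ℕ × ℕ × ℕ | 1 ≤ p.1 ∧ 2 * p.1 ≤ p.2.2 ∧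
        n = 2 ^ (2 * p.1 - 2) + 2 ^ (2 * p.1 - 1) + p.2.1 * 2 ^ (2 * p.1)
            + 2 ^ p.2.2}.ncard : ℤ) =
      if padicValNat 2 n % 2 = 0 ∧ n.testBit (padicValNat 2 n + 1) = true then
        (Nat.log 2 n : ℤ) - padicValNat 2 n - 1
      else 0 :=
  stmt2_general n
end

section
/- For every integer n ≥ 2 with binary expansion n = Σ_{i=a}^{e} n_i·2^i (n_a ≠ 0 ≠ n_e), the number of triples (s,k,ℓ) with s ≥ 1, k ≥ 0, ℓ ≥ 2s, and n = 2^{2s−1} + k·2^{2s} + 2^ℓ equals e − 2s + 1 when a = 2s−1 is odd and n is not a power of 2; otherwise it equals 0. -/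
open Classical

/-! Write `n = 2 ^ a * m` with `m` odd. The defining equation of a triple reads
`n = 2 ^ (2s - 1) * (2 ^ (ℓ - 2s + 1) + 2k + 1)`, so by uniqueness of this factorisation a triple
exists only when `a = 2s - 1` is odd, and then the triples correspond to the exponents
`j = ℓ - a ≥ 1` with `2 ^ j ≤ m`, of which there are `⌊log₂ m⌋ = e - a`; this is `0` exactly
when `m = 1`, i.e. when `n` is a power of two. -/

def triples (n : ℕ) : Set (ℕ × ℕ × ℕ) :=
  {p | 1 ≤ p.1 ∧ 2 * p.1 ≤ p.2.2 ∧ n = 2 ^ (2 * p.1 - 1) + p.2.1 * 2 ^ (2 * p.1) + 2 ^ p.2.2}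

lemma Nat.log_pow_mul {b : ℕ} (hb : 1 < b) (a : ℕ) {m : ℕ} (hm : m ≠ 0) :
    Nat.log b (b ^ a * m) = a + Nat.log b m := by
  induction a with
  | zero => simp
  | succ a ih =>
    rw [pow_succ, mul_right_comm, Nat.log_mul_base hb (by positivity), ih]
    ring

lemma padicValNat_two_pow_mul_odd (a : ℕ) {m : ℕ} (hm : Odd m) :
    padicValNat 2 (2 ^ a * m) = a := by
  rw [padicValNat.mul (by positivity) hm.pos.ne', padicValNat.prime_pow,
    padicValNat.eq_zero_of_not_dvd hm.not_two_dvd_nat, add_zero]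

lemma two_pow_mul_odd_injective {a b m m' : ℕ} (hm : Odd m) (hm' : Odd m')
    (h : 2 ^ a * m = 2 ^ b * m') : a = b ∧ m = m' := by
  obtain rfl : a = b := by
    rw [← padicValNat_two_pow_mul_odd a hm, h, padicValNat_two_pow_mul_odd b hm']
  exact ⟨rfl, Nat.eq_of_mul_eq_mul_left (by positivity) h⟩

lemma two_pow_mul_odd_eq_two_pow_iff {a c m : ℕ} (hm : Odd m) :
    2 ^ a * m = 2 ^ c ↔ a = c ∧ m = 1 := by
  constructor
  · intro h
    exact two_pow_mul_odd_injective hm odd_one (by rw [h, mul_one])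
  · rintro ⟨rfl, rfl⟩
    exact mul_one _

lemma mem_triples_two_pow_mul_odd {a m : ℕ} (hm : Odd m) {p : ℕ × ℕ × ℕ} :
    p ∈ triples (2 ^ a * m) ↔
      2 * p.1 = a + 1 ∧ a < p.2.2 ∧ m = 2 ^ (p.2.2 - a) + 2 * p.2.1 + 1 := by
  obtain ⟨s, k, l⟩ := p
  simp only [triples, Set.mem_ofPred_eq]
  constructor
  · rintro ⟨hs, hsl, h⟩
    obtain ⟨t, rfl⟩ : ∃ t, s = t + 1 := ⟨s - 1, by omega⟩
    obtain ⟨j, rfl⟩ : ∃ j, l = 2 * t + 2 + j := ⟨l - (2 * t + 2), by omega⟩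
    have hfac : 2 ^ (2 * (t + 1) - 1) + k * 2 ^ (2 * (t + 1)) + 2 ^ (2 * t + 2 + j) =
        2 ^ (2 * t + 1) * (2 ^ (j + 1) + 2 * k + 1) := by
      rw [show 2 * (t + 1) - 1 = 2 * t + 1 by omega]
      ring
    obtain ⟨rfl, rfl⟩ := two_pow_mul_odd_injective hm (by simp [parity_simps]) (h.trans hfac)
    refine ⟨by ring, by omega, ?_⟩
    rw [show 2 * t + 2 + j - (2 * t + 1) = j + 1 by omega]
  · rintro ⟨hs, hal, rfl⟩
    refine ⟨by omega, by omega, ?_⟩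
    obtain ⟨j, rfl⟩ : ∃ j, l = a + j := ⟨l - a, by omega⟩
    rw [show 2 * s - 1 = a by omega, hs, Nat.add_sub_cancel_left]
    ring

lemma exists_eq_two_pow_add_two_mul_add_one_iff {m j : ℕ} (hm : Odd m) (hj : 1 ≤ j) :
    (∃ k, m = 2 ^ j + 2 * k + 1) ↔ j ≤ Nat.log 2 m := by
  rw [Nat.le_log_iff_pow_le one_lt_two hm.pos.ne']
  obtain ⟨t, rfl⟩ := hm
  obtain ⟨i, rfl⟩ : ∃ i, j = i + 1 := ⟨j - 1, by omega⟩
  rw [pow_succ]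
  constructor
  · rintro ⟨k, hk⟩
    omega
  · intro h
    exact ⟨t - 2 ^ i, by omega⟩

lemma ncard_triples_two_pow_mul_odd (a : ℕ) {m : ℕ} (hm : Odd m) :
    (triples (2 ^ a * m)).ncard = if Odd a then Nat.log 2 m else 0 := by
  have hinj : Set.InjOn (fun p : ℕ × ℕ × ℕ => p.2.2) (triples (2 ^ a * m)) := by
    rintro ⟨s, k, l⟩ hp ⟨s', k', l'⟩ hp' (rfl : l = l')
    rw [mem_triples_two_pow_mul_odd hm] at hp hp'
    dsimp only at hp hp'
    simp only [Prod.mk.injEq, and_true]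
    omega
  rw [← hinj.ncard_image]
  split_ifs with ha
  · suffices (fun p : ℕ × ℕ × ℕ => p.2.2) '' triples (2 ^ a * m) =
        Set.Ioc a (a + Nat.log 2 m) by
      rw [this, Set.ncard_Ioc_nat, Nat.add_sub_cancel_left]
    ext l
    obtain ⟨r, rfl⟩ := ha
    simp only [Set.mem_image, mem_triples_two_pow_mul_odd hm, Prod.exists, Set.mem_Ioc]
    constructor
    · rintro ⟨s, k, _, ⟨-, hal, hk⟩, rfl⟩
      have := (exists_eq_two_pow_add_two_mul_add_one_iff hm (by omega)).1 ⟨k, hk⟩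
      omega
    · rintro ⟨hal, hlm⟩
      obtain ⟨k, hk⟩ := (exists_eq_two_pow_add_two_mul_add_one_iff hm (by omega)).2
        (show l - (2 * r + 1) ≤ Nat.log 2 m by omega)
      exact ⟨r + 1, k, l, ⟨by ring, hal, hk⟩, rfl⟩
  · suffices triples (2 ^ a * m) = ∅ by rw [this, Set.image_empty, Set.ncard_empty]
    refine Set.eq_empty_of_forall_notMem fun p hp => ha ?_
    exact ⟨p.1 - 1, by have := ((mem_triples_two_pow_mul_odd hm).1 hp).1; omega⟩

/-- Lemma S5: count of triples (s,k,ℓ) with s ≥ 1, k ≥ 0, ℓ ≥ 2s and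
n = 2^{2s−1} + k·2^{2s} + 2^ℓ; equals e − 2s + 1 = e − a when a = 2s−1 is odd
and n is not a power of 2, and 0 otherwise. -/
theorem stmt3 (n : ℕ) (hn : 2 ≤ n) :
    ({p : ℕ × ℕ × ℕ | 1 ≤ p.1 ∧ 2 * p.1 ≤ p.2.2 ∧
        n = 2 ^ (2 * p.1 - 1) + p.2.1 * 2 ^ (2 * p.1) + 2 ^ p.2.2}.ncard : ℤ) =
      if padicValNat 2 n % 2 = 1 ∧ ¬∃ c : ℕ, n = 2 ^ c then
        (Nat.log 2 n : ℤ) - padicValNat 2 n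
      else 0 := by
  obtain ⟨a, m, hm, rfl⟩ := Nat.exists_eq_two_pow_mul_odd (show n ≠ 0 by omega)
  have hpow : (∃ c, 2 ^ a * m = 2 ^ c) ↔ m = 1 := by
    simp only [two_pow_mul_odd_eq_two_pow_iff hm, exists_eq_left']
  change ((triples (2 ^ a * m)).ncard : ℤ) = _
  rw [ncard_triples_two_pow_mul_odd a hm, padicValNat_two_pow_mul_odd a hm,
    Nat.log_pow_mul one_lt_two a hm.pos.ne', hpow]
  by_cases ha : Odd a <;> by_cases hm1 : m = 1 <;> simp [ha, hm1, ← Nat.odd_iff]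
end

section
/- For fixed integers s ≥ 1, t > s, k_3 ≥ 0, and n with n ≥ 2^{2t−1+k_3} and 2^{2s−2} dividing n − 2^{2t−1+k_3} appropriately, the number of k_2 ≥ 0 such that n − (2k_2+1)·2^{2t−2} − 2^{2t−1+k_3} is a positive odd multiple of 2^{2s−2} (i.e., equals (2k_1+1)·2^{2s−2} for some k_1 ≥ 0) is ⌊n/2^{2t−1} + 1/2⌋ − 2^{k_3}, provided v_2(n) = 2s−2. -/
/-! Subtracting `2^{2t-1+k₃}` from `n` leaves `m` with `v₂(m) = 2s-2 < 2t-2`. Removing a further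
odd multiple `(2k₂+1)·2^{2t-2}` of a strictly higher power of two cannot change the valuation, so
`k₂` is admissible exactly when `(2k₂+1)·2^{2t-2} < m`, which gives `⌊(m/2^{2t-2} + 1)/2⌋`
choices; adding back `2^{2t-1+k₃}` turns this into the stated floor. -/

theorem exists_odd_mul_two_pow_iff {r a : ℕ} :
    (∃ j, r = (2 * j + 1) * 2 ^ a) ↔ 2 ^ a ∣ r ∧ ¬ 2 ^ (a + 1) ∣ r := by
  constructor
  · rintro ⟨j, rfl⟩
    refine ⟨dvd_mul_left _ _, fun ⟨c, hc⟩ => ?_⟩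
    rw [pow_succ, mul_comm, mul_assoc] at hc
    have := Nat.eq_of_mul_eq_mul_left (by positivity) hc
    omega
  · rintro ⟨⟨w, rfl⟩, hodd⟩
    have hw : ¬ 2 ∣ w := fun ⟨v, hv⟩ => hodd ⟨v, by rw [hv, pow_succ, mul_assoc]⟩
    exact ⟨w / 2, by rw [mul_comm]; congr 1; omega⟩

theorem setOf_odd_mul_two_pow_add_odd_mul_two_pow_eq {m a d : ℕ} (had : a < d)
    (hm : 2 ^ a ∣ m) (hm' : ¬ 2 ^ (a + 1) ∣ m) :
    {k | ∃ j, m = (2 * j + 1) * 2 ^ a + (2 * k + 1) * 2 ^ d} = Set.Iio ((m / 2 ^ d + 1) / 2) := by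
  ext k
  have hd : 0 < 2 ^ d := by positivity
  have hdvd : ∀ b ≤ d, 2 ^ b ∣ (2 * k + 1) * 2 ^ d :=
    fun b hb => (pow_dvd_pow 2 hb).mul_left _
  simp only [Set.mem_ofPred_eq, Set.mem_Iio]
  constructor
  · rintro ⟨j, hj⟩
    have : 2 * k + 1 ≤ m / 2 ^ d := (Nat.le_div_iff_mul_le hd).2 (by omega)
    omega
  · intro hk
    have hle : (2 * k + 1) * 2 ^ d ≤ m := (Nat.le_div_iff_mul_le hd).1 (by omega)
    obtain ⟨j, hj⟩ : ∃ j, m - (2 * k + 1) * 2 ^ d = (2 * j + 1) * 2 ^ a := by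
      rw [exists_odd_mul_two_pow_iff, ← Nat.dvd_add_left (hdvd a had.le),
        ← Nat.dvd_add_left (hdvd (a + 1) had), Nat.sub_add_cancel hle]
      exact ⟨hm, hm'⟩
    exact ⟨j, by omega⟩

theorem pow_dvd_and_not_pow_succ_dvd_of_padicValNat_add {p m e a : ℕ} [Fact p.Prime]
    (h : padicValNat p (m + e) = a) (he : p ^ (a + 1) ∣ e) (he0 : e ≠ 0) :
    p ^ a ∣ m ∧ ¬ p ^ (a + 1) ∣ m :=
  ⟨(Nat.dvd_add_left ((pow_dvd_pow p a.le_succ).trans he)).1 (h ▸ pow_padicValNat_dvd),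
    (Nat.dvd_add_left he).not.1 (h ▸ pow_succ_padicValNat_not_dvd (by omega))⟩

theorem add_two_mul_mul_add_div_two_mul {m b : ℕ} (c : ℕ) (hb : 0 < b) :
    (m + 2 * b * c + b) / (2 * b) = (m / b + 1) / 2 + c := by
  rw [add_right_comm, Nat.add_mul_div_left _ _ (by omega), mul_comm 2 b,
    ← Nat.div_div_eq_div_mul, Nat.add_div_right _ hb]

/-- Inner counting step of Lemma S4: for fixed s,t,k₃, the number of k₂ with
n = (2k₁+1)·2^{2s−2} + (2k₂+1)·2^{2t−2} + 2^{2t−1+k₃} (for some k₁ ≥ 0)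
equals ⌊n/2^{2t−1} + 1/2⌋ − 2^{k₃}, provided v₂(n) = 2s−2. -/
theorem stmt6 (n s t k3 : ℕ) (hs : 1 ≤ s) (hst : s < t)
    (hn : 2 ^ (2 * t - 1 + k3) ≤ n) (ha : padicValNat 2 n = 2 * s - 2) :
    ({k2 : ℕ | ∃ k1 : ℕ,
        n = (2 * k1 + 1) * 2 ^ (2 * s - 2) + (2 * k2 + 1) * 2 ^ (2 * t - 2)
            + 2 ^ (2 * t - 1 + k3)}.ncard : ℤ) =
      (((n + 2 ^ (2 * t - 2)) / 2 ^ (2 * t - 1) : ℕ) : ℤ) - 2 ^ k3 := by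
  set a := 2 * s - 2
  set d := 2 * t - 2
  have hE : 2 ^ (2 * t - 1 + k3) = 2 * 2 ^ d * 2 ^ k3 := by
    rw [← pow_succ', ← pow_add]; congr 1; omega
  rw [hE] at hn ⊢
  obtain ⟨m, rfl⟩ := Nat.exists_eq_add_of_le' hn
  have hEdvd : 2 ^ (a + 1) ∣ 2 * 2 ^ d * 2 ^ k3 :=
    (by rw [← pow_succ']; exact pow_dvd_pow 2 (by omega) : 2 ^ (a + 1) ∣ 2 * 2 ^ d).mul_right _
  obtain ⟨hm, hm'⟩ := pow_dvd_and_not_pow_succ_dvd_of_padicValNat_add ha hEdvd (by positivity)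
  have hset : {k2 : ℕ | ∃ k1 : ℕ,
      m + 2 * 2 ^ d * 2 ^ k3 = (2 * k1 + 1) * 2 ^ a + (2 * k2 + 1) * 2 ^ d + 2 * 2 ^ d * 2 ^ k3} =
      Set.Iio ((m / 2 ^ d + 1) / 2) := by
    rw [← setOf_odd_mul_two_pow_add_odd_mul_two_pow_eq (by omega) hm hm']
    simp only [Nat.add_right_cancel_iff]
  rw [hset, Set.ncard_Iio_nat, show 2 * t - 1 = 1 + d by omega, pow_add, pow_one,
    add_two_mul_mul_add_div_two_mul _ (by positivity)]
  push_cast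
  ring
end

section
/- Let u(n) denote the number of unique path partitions of n, with generating function Σ_{n≥1} u(n)q^n = 2·Σ_{i≥1} q^{2^i−1}(1+q^{2^{i−1}})·Π_{j=0}^{i−2} 1/(1−q^{2^j}). Then u(n) is even for all n ≥ 1, and u(2n) = u(2n−1) for all n ≥ 1. -/
/-!
Every summand is divisible by 2, and only finitely many summands contribute to a given
coefficient, since the `i`-th one starts at `q^(2^i - 1)`. Multiplying the `i`-th summand by
`1 - q` cancels the factor `1/(1 - q)` of the product (for `i = 1` it gives `2q(1 - q²)`), leaving
`q^(2^i - 1)` times a series in `q²`: an odd power series. Its coefficient of `q^(2n)`, which is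
the difference of the coefficients of `q^(2n)` and `q^(2n-1)` of the summand, therefore vanishes.
-/

/-- The i-th summand of the generating function of unique path partitions:
2·q^{2^i−1}(1+q^{2^{i−1}})·∏_{j=0}^{i−2} 1/(1−q^{2^j}). -/
noncomputable def Useries (i : ℕ) : PowerSeries ℤ :=
  2 * PowerSeries.X ^ (2 ^ i - 1) * (1 + PowerSeries.X ^ (2 ^ (i - 1))) *
    ∏ j ∈ Finset.range (i - 1),
      ((1 - PowerSeries.X ^ (2 ^ j) : PowerSeries ℤ).invOfUnit 1)

open PowerSeries Finset

namespace PowerSeries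

variable {R : Type*} [CommRing R]

theorem map_invOfUnit_of_map_eq (f : R⟦X⟧ →+* R⟦X⟧) {φ : R⟦X⟧} {u : Rˣ}
    (hφ : constantCoeff φ = u) (hf : f φ = φ) : f (φ.invOfUnit u) = φ.invOfUnit u := by
  have hinv : φ * φ.invOfUnit u = 1 := mul_invOfUnit φ u hφ
  have hfinv : φ * f (φ.invOfUnit u) = 1 := by
    simpa only [map_mul, hf, map_one] using congrArg f hinv
  exact (left_inv_eq_right_inv (by rw [mul_comm, hinv]) hfinv).symm

theorem evalNegHom_X_pow (n : ℕ) : evalNegHom (X ^ n : R⟦X⟧) = (-1) ^ n * X ^ n := by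
  rw [map_pow, evalNegHom_X, neg_pow]

theorem coeff_eq_zero_of_evalNegHom_eq_neg [IsAddTorsionFree R] {φ : R⟦X⟧}
    (h : evalNegHom φ = -φ) {n : ℕ} (hn : Even n) : coeff n φ = 0 := by
  have := congrArg (coeff n) h
  rwa [evalNegHom, coeff_rescale, hn.neg_one_pow, one_mul, map_neg, self_eq_neg] at this

theorem evalNegHom_invOfUnit_one_sub_X_pow {n : ℕ} (hn : Even n) (hn0 : n ≠ 0) :
    evalNegHom ((1 - X ^ n : R⟦X⟧).invOfUnit 1) = (1 - X ^ n : R⟦X⟧).invOfUnit 1 := by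
  refine map_invOfUnit_of_map_eq _ (by simp [hn0]) ?_
  rw [map_sub, map_one, evalNegHom_X_pow, hn.neg_one_pow, one_mul]

end PowerSeries

theorem X_pow_dvd_Useries (i : ℕ) : X ^ (2 ^ i - 1) ∣ Useries i :=
  ((dvd_mul_left _ _).mul_right _).mul_right _

theorem coeff_Useries_succ_eq_zero {n i : ℕ} (h : n ≤ i) : coeff n (Useries (i + 1)) = 0 := by
  have := (i + 1).lt_two_pow_self
  exact X_pow_dvd_iff.mp (X_pow_dvd_Useries _) n (by omega)

theorem two_dvd_coeff_Useries (n i : ℕ) : 2 ∣ coeff n (Useries i) := by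
  obtain ⟨ψ, hψ⟩ : (2 : ℤ⟦X⟧) ∣ Useries i := ((dvd_mul_right _ _).mul_right _).mul_right _
  rw [hψ, ← map_ofNat C 2, coeff_C_mul]
  exact dvd_mul_right _ _

theorem one_sub_X_mul_Useries_add_two (k : ℕ) :
    (1 - X) * Useries (k + 2) = 2 * X ^ (2 ^ (k + 2) - 1) * (1 + X ^ (2 ^ (k + 1))) *
      ∏ j ∈ range k, (1 - X ^ (2 ^ (j + 1)) : ℤ⟦X⟧).invOfUnit 1 := by
  have hinv : (1 - X : ℤ⟦X⟧) * (1 - X : ℤ⟦X⟧).invOfUnit 1 = 1 := mul_invOfUnit _ 1 (by simp)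
  rw [Useries, show k + 2 - 1 = k + 1 by omega, prod_range_succ', pow_zero, pow_one]
  linear_combination (2 * X ^ (2 ^ (k + 2) - 1) * (1 + X ^ (2 ^ (k + 1))) *
      ∏ j ∈ range k, (1 - X ^ (2 ^ (j + 1)) : ℤ⟦X⟧).invOfUnit 1) * hinv

theorem evalNegHom_one_sub_X_mul_Useries {i : ℕ} (hi : 1 ≤ i) :
    evalNegHom ((1 - X) * Useries i) = -((1 - X) * Useries i) := by
  obtain rfl | ⟨k, rfl⟩ : i = 1 ∨ ∃ k, i = k + 2 := by
    rcases i with _ | _ | k <;> simp_all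
  · simp only [Useries, Nat.add_one_sub_one, pow_zero, pow_one, range_zero, prod_empty, mul_one,
      map_mul, map_add, map_sub, map_one, map_ofNat, evalNegHom_X]
    ring
  · have hodd : Odd (2 ^ (k + 2) - 1) :=
      Nat.Even.sub_odd Nat.one_le_two_pow (Nat.even_pow.mpr ⟨even_two, by omega⟩) odd_one
    have heven (m : ℕ) : Even (2 ^ (m + 1)) := Nat.even_pow.mpr ⟨even_two, by omega⟩
    rw [one_sub_X_mul_Useries_add_two]
    simp only [map_mul, map_add, map_prod, map_one, map_ofNat, evalNegHom_X_pow]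
    rw [hodd.neg_one_pow, (heven k).neg_one_pow, prod_congr rfl fun j _ =>
      evalNegHom_invOfUnit_one_sub_X_pow (heven j) (by positivity)]
    ring

theorem coeff_two_mul_Useries {i n : ℕ} (hi : 1 ≤ i) (hn : 1 ≤ n) :
    coeff (2 * n) (Useries i) = coeff (2 * n - 1) (Useries i) := by
  obtain ⟨m, rfl⟩ : ∃ m, n = m + 1 := ⟨n - 1, by omega⟩
  have h := coeff_eq_zero_of_evalNegHom_eq_neg (evalNegHom_one_sub_X_mul_Useries hi)
    (even_two_mul (m + 1))
  rwa [sub_mul, one_mul, map_sub, show 2 * (m + 1) = 2 * m + 1 + 1 by ring, coeff_succ_X_mul,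
    sub_eq_zero] at h

/-- If u(n) is the n-th coefficient of Σ_{i≥1} of the above summands, then
u(n) is even for all n ≥ 1 and u(2n) = u(2n−1) for all n ≥ 1. -/
theorem stmt7 (u : ℕ → ℤ)
    (hu : ∀ n : ℕ, u n = ∑' i : ℕ, PowerSeries.coeff n (Useries (i + 1))) :
    (∀ n, 1 ≤ n → 2 ∣ u n) ∧ (∀ n, 1 ≤ n → u (2 * n) = u (2 * n - 1)) := by
  refine ⟨fun n _ => ?_, fun n hn => ?_⟩
  · rw [hu, tsum_eq_sum (s := range n) fun i hi => coeff_Useries_succ_eq_zero (by simpa using hi)]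
    exact dvd_sum fun i _ => two_dvd_coeff_Useries n (i + 1)
  · rw [hu, hu]
    exact tsum_congr fun i => coeff_two_mul_Useries (Nat.le_add_left 1 i) hn
end

section
/- Define w(n) by the formal power series identity Σ_{n≥2} w(n)q^n = Σ_{i≥2} q^{2^{i−1}}(1+q^{2^{i−2}}) / ((1−q)·Π_{j=0}^{i−3}(1−q^{2^j})). Then w(n) is odd if and only if n is a power of 2. -/
/-! Modulo 2 the Frobenius gives `(1 - q) ∏_{j<k} (1 - q^{2^j}) = (1 + q)^{2^k} = 1 + q^{2^k}`, so
the `i`-th summand reduces to `q^{2^{i-1}}`. Hence `w(n)` is congruent modulo 2 to the number of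
`i ≥ 2` with `n = 2^{i-1}`, which is `1` or `0` according as `n` is a power of 2 or not. -/

open PowerSeries Finset

/-- The i-th summand of the reduced generating function:
q^{2^{i−1}}(1+q^{2^{i−2}}) / ((1−q)·∏_{j=0}^{i−3}(1−q^{2^j})). -/
noncomputable def Wseries (i : ℕ) : PowerSeries ℤ :=
  PowerSeries.X ^ (2 ^ (i - 1)) * (1 + PowerSeries.X ^ (2 ^ (i - 2))) *
    (((1 - PowerSeries.X) *
        ∏ j ∈ Finset.range (i - 2), (1 - PowerSeries.X ^ (2 ^ j)) :
      PowerSeries ℤ).invOfUnit 1)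

instance PowerSeries.charP {R : Type*} [CommRing R] (p : ℕ) [CharP R p] : CharP R⟦X⟧ p :=
  charP_of_injective_ringHom C_injective p

section CharTwo

variable {R : Type*} [CommRing R] [CharP R 2]

theorem CharTwo.one_sub_pow_two_pow (x : R) (j : ℕ) : 1 - x ^ 2 ^ j = (1 + x) ^ 2 ^ j := by
  rw [add_pow_char_pow, one_pow, CharTwo.sub_eq_add]

theorem CharTwo.one_sub_mul_prod_one_sub_pow_two_pow (x : R) (i : ℕ) :
    (1 - x) * ∏ j ∈ range i, (1 - x ^ 2 ^ j) = (1 + x) ^ 2 ^ i := by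
  induction i with
  | zero => simp [CharTwo.sub_eq_add]
  | succ i ih =>
    rw [prod_range_succ, ← mul_assoc, ih, CharTwo.one_sub_pow_two_pow, ← pow_add, ← two_mul,
      ← pow_succ']

end CharTwo

theorem Wseries_add_two (i : ℕ) :
    Wseries (i + 2) = X ^ 2 ^ (i + 1) * (1 + X ^ 2 ^ i) *
      ((1 - X) * ∏ j ∈ range i, (1 - X ^ 2 ^ j) : ℤ⟦X⟧).invOfUnit 1 :=
  rfl

theorem coeff_Wseries_of_lt {n i : ℕ} (h : n < 2 ^ (i + 1)) :
    coeff n (Wseries (i + 2)) = 0 := by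
  rw [Wseries_add_two, mul_assoc, coeff_X_pow_mul', if_neg h.not_ge]

theorem tsum_coeff_Wseries (n : ℕ) :
    ∑' i, coeff n (Wseries (i + 2)) = ∑ i ∈ range n, coeff n (Wseries (i + 2)) :=
  tsum_eq_sum fun i hi => coeff_Wseries_of_lt <| by
    have := Nat.lt_two_pow_self (n := i + 1)
    rw [mem_range] at hi
    omega

theorem map_Wseries_zmod_two (i : ℕ) :
    map (Int.castRingHom (ZMod 2)) (Wseries (i + 2)) = X ^ 2 ^ (i + 1) := by
  set D : ℤ⟦X⟧ := (1 - X) * ∏ j ∈ range i, (1 - X ^ 2 ^ j)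
  have hD : D * D.invOfUnit 1 = 1 := mul_invOfUnit D 1 (by simp [D, map_prod])
  have hnum :
      map (Int.castRingHom (ZMod 2)) (1 + X ^ 2 ^ i) = map (Int.castRingHom (ZMod 2)) D := by
    simp only [D, map_add, map_mul, map_prod, map_sub, map_one, map_pow, map_X,
      CharTwo.one_sub_mul_prod_one_sub_pow_two_pow, add_pow_char_pow, one_pow]
  rw [Wseries_add_two, map_mul, map_mul, hnum, mul_assoc, ← map_mul, hD, map_one, mul_one,
    map_pow, map_X]

theorem sum_range_ite_two_pow_succ_eq_one_iff {R : Type*} [AddCommMonoidWithOne R]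
    [NeZero (1 : R)] (n : ℕ) :
    (∑ i ∈ range n, if n = 2 ^ (i + 1) then (1 : R) else 0) = 1 ↔ ∃ a, n = 2 ^ (a + 1) := by
  by_cases h : ∃ a, n = 2 ^ (a + 1)
  · obtain ⟨a, rfl⟩ := h
    simp_rw [(Nat.pow_right_injective le_rfl).eq_iff, add_left_inj]
    simpa using Nat.lt_two_pow_self.trans (Nat.pow_lt_pow_succ one_lt_two)
  · rw [sum_eq_zero fun i _ => if_neg fun hi => h ⟨i, hi⟩]
    exact iff_of_false zero_ne_one h

/-- w(n) is odd if and only if n is a power of 2. -/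
theorem stmt8 (w : ℕ → ℤ)
    (hw : ∀ n : ℕ, w n = ∑' i : ℕ, PowerSeries.coeff n (Wseries (i + 2))) :
    ∀ n, 2 ≤ n → (Odd (w n) ↔ ∃ a : ℕ, n = 2 ^ a) := by
  intro n hn
  have hcast : (w n : ZMod 2) = ∑ i ∈ range n, if n = 2 ^ (i + 1) then 1 else 0 := by
    rw [hw, tsum_coeff_Wseries, Int.cast_sum]
    refine sum_congr rfl fun i _ => ?_
    simpa [coeff_X_pow] using congrArg (coeff n) (map_Wseries_zmod_two i)
  rw [← ZMod.intCast_eq_one_iff_odd, hcast, sum_range_ite_two_pow_succ_eq_one_iff]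
  refine ⟨fun ⟨a, ha⟩ => ⟨a + 1, ha⟩, fun ⟨a, ha⟩ => ?_⟩
  obtain _ | a := a
  · omega
  · exact ⟨a, ha⟩
end

section
/- Define w(n) by Σ_{n≥2} w(n)q^n = Σ_{i≥2} q^{2^{i−1}}(1+q^{2^{i−2}}) / ((1−q)·Π_{j=0}^{i−3}(1−q^{2^j})). If n = 2^a with a ≥ 1, then w(n) ≡ 2⌊a/2⌋ + 1 (mod 8). -/
open PowerSeries Finset

namespace PowerSeries

section Doubling

variable {R : Type*} [CommRing R] {F G : R⟦X⟧}

theorem coeff_zero_eq_of_one_sub_X_mul_eq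
    (h : (1 - X) * F = (1 + X) * expand 2 two_ne_zero G) : coeff 0 F = coeff 0 G := by
  simpa [sub_mul, add_mul, coeff_zero_X_mul] using congrArg (coeff 0) h

theorem coeff_succ_eq_of_one_sub_X_mul_eq
    (h : (1 - X) * F = (1 + X) * expand 2 two_ne_zero G) (n : ℕ) :
    coeff (n + 1) F =
      coeff n F + coeff (n + 1) (expand 2 two_ne_zero G) + coeff n (expand 2 two_ne_zero G) := by
  have hn := congrArg (coeff (n + 1)) h
  simp only [sub_mul, add_mul, one_mul, map_sub, map_add, coeff_succ_X_mul] at hn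
  linear_combination hn

theorem coeff_two_mul_add_one_eq_of_one_sub_X_mul_eq
    (h : (1 - X) * F = (1 + X) * expand 2 two_ne_zero G) (m : ℕ) :
    coeff (2 * m + 1) F = coeff (2 * m) F + coeff m G := by
  rw [coeff_succ_eq_of_one_sub_X_mul_eq h, coeff_expand_mul,
    coeff_expand_of_not_dvd _ _ _ (by omega), add_zero]

theorem coeff_two_mul_add_two_eq_of_one_sub_X_mul_eq
    (h : (1 - X) * F = (1 + X) * expand 2 two_ne_zero G) (m : ℕ) :
    coeff (2 * m + 2) F = coeff (2 * m + 1) F + coeff (m + 1) G := by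
  rw [coeff_succ_eq_of_one_sub_X_mul_eq h, show 2 * m + 1 + 1 = 2 * (m + 1) by ring,
    coeff_expand_mul, coeff_expand_of_not_dvd _ _ _ (by omega), add_zero]

theorem coeff_two_mul_eq_of_one_sub_X_mul_eq
    (h : (1 - X) * F = (1 + X) * expand 2 two_ne_zero G) (m : ℕ) :
    coeff (2 * m) F = 2 * ∑ l ∈ range (m + 1), coeff l G - coeff m G := by
  induction m with
  | zero => simp [coeff_zero_eq_of_one_sub_X_mul_eq h, two_mul]
  | succ m ih =>
    rw [show 2 * (m + 1) = 2 * m + 2 by ring, coeff_two_mul_add_two_eq_of_one_sub_X_mul_eq h,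
      coeff_two_mul_add_one_eq_of_one_sub_X_mul_eq h, ih, sum_range_succ _ (m + 1)]
    ring

theorem sum_coeff_two_mul_eq_of_one_sub_X_mul_eq
    (h : (1 - X) * F = (1 + X) * expand 2 two_ne_zero G) (m : ℕ) :
    ∑ n ∈ range (2 * m + 1), coeff n F =
      ∑ l ∈ range (m + 1), coeff l G + 4 * ∑ j ∈ range m, ∑ l ∈ range (j + 1), coeff l G := by
  induction m with
  | zero => simp [coeff_zero_eq_of_one_sub_X_mul_eq h]
  | succ m ih =>
    rw [show 2 * (m + 1) + 1 = 2 * m + 1 + 1 + 1 by ring, sum_range_succ, sum_range_succ, ih,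
      coeff_two_mul_add_two_eq_of_one_sub_X_mul_eq h,
      coeff_two_mul_add_one_eq_of_one_sub_X_mul_eq h, coeff_two_mul_eq_of_one_sub_X_mul_eq h,
      sum_range_succ (fun j ↦ ∑ l ∈ range (j + 1), coeff l G) m, sum_range_succ _ (m + 1)]
    ring

end Doubling

end PowerSeries

noncomputable def Wdenom (k : ℕ) : ℤ⟦X⟧ := (1 - X) * ∏ j ∈ range k, (1 - X ^ 2 ^ j)

theorem constantCoeff_Wdenom (k : ℕ) : constantCoeff (Wdenom k) = 1 := by
  simp [Wdenom, map_prod]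

theorem Wseries_mul_Wdenom (k : ℕ) :
    Wseries (k + 2) * Wdenom k = X ^ 2 ^ (k + 1) * (1 + X ^ 2 ^ k) := by
  rw [Wseries, show k + 2 - 1 = k + 1 by omega, Nat.add_sub_cancel, mul_assoc,
    mul_comm _ (Wdenom k), Wdenom, mul_invOfUnit _ _ (by simp [map_prod]), mul_one]

theorem one_sub_X_mul_expand_Wdenom (k : ℕ) :
    (1 - X) * expand 2 two_ne_zero (Wdenom k) = (1 + X) * Wdenom (k + 1) := by
  simp only [Wdenom, map_mul, map_sub, map_one, map_prod, map_pow, expand_X, ← pow_mul,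
    ← pow_succ', prod_range_succ' _ k, pow_zero, pow_one]
  ring

theorem one_sub_X_mul_Wseries_succ (k : ℕ) :
    (1 - X) * Wseries (k + 3) = (1 + X) * expand 2 two_ne_zero (Wseries (k + 2)) := by
  have hden : Wdenom (k + 1) ≠ 0 := fun h0 ↦ by simpa [h0] using constantCoeff_Wdenom (k + 1)
  have hnum : expand 2 two_ne_zero (Wseries (k + 2)) * expand 2 two_ne_zero (Wdenom k) =
      X ^ 2 ^ (k + 2) * (1 + X ^ 2 ^ (k + 1)) := by
    rw [← map_mul, Wseries_mul_Wdenom]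
    simp only [map_mul, map_add, map_one, map_pow, expand_X, ← pow_mul, ← pow_succ']
  refine mul_right_cancel₀ hden ?_
  linear_combination (1 - X) * Wseries_mul_Wdenom (k + 1) +
    expand 2 two_ne_zero (Wseries (k + 2)) * one_sub_X_mul_expand_Wdenom k - (1 - X) * hnum

noncomputable def Wseq : ℕ → ℤ⟦X⟧
  | 0 => X
  | k + 1 => Wseries (k + 2)

theorem one_sub_X_mul_Wseq_succ (k : ℕ) :
    (1 - X) * Wseq (k + 1) = (1 + X) * expand 2 two_ne_zero (Wseq k) := by
  cases k with
  | zero =>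
    have h := Wseries_mul_Wdenom 0
    norm_num [Wdenom] at h
    simp only [Wseq, expand_X]
    linear_combination h
  | succ k => exact one_sub_X_mul_Wseries_succ k

theorem Wseq_coeff_two_pow_modEq (k c : ℕ) :
    ∑ l ∈ range (2 ^ (k + c) + 1), coeff l (Wseq k) ≡ 1 [ZMOD 4] ∧
      coeff (2 ^ (k + c)) (Wseq k) ≡ if c = 0 then 1 else 2 * ((k % 2 : ℕ) : ℤ) [ZMOD 8] := by
  induction k with
  | zero =>
    cases c <;> simp [Wseq, coeff_X, sum_ite_eq', Int.ModEq]
  | succ k ih =>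
    obtain ⟨hsum, hcoeff⟩ := ih
    have h := one_sub_X_mul_Wseq_succ k
    rw [show 2 ^ (k + 1 + c) = 2 * 2 ^ (k + c) by ring]
    constructor
    · rw [sum_coeff_two_mul_eq_of_one_sub_X_mul_eq h]
      exact (Int.add_mul_emod_self_left _ _ _).trans hsum
    · rw [coeff_two_mul_eq_of_one_sub_X_mul_eq h]
      convert (hsum.mul_left' (c := 2)).sub hcoeff using 1
      · norm_num
      · push_cast
        split_ifs <;> omega

theorem coeff_Wseries_eq_zero_of_lt {k n : ℕ} (hn : n < 2 ^ (k + 1)) :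
    coeff n (Wseries (k + 2)) = 0 := by
  rw [Wseries, show k + 2 - 1 = k + 1 by omega, mul_assoc, coeff_X_pow_mul', if_neg (by omega)]

theorem Nat.sum_range_succ_mod_two (n : ℕ) : ∑ k ∈ range n, (k + 1) % 2 = (n + 1) / 2 := by
  induction n with
  | zero => rfl
  | succ n ih => rw [sum_range_succ, ih]; omega

/-- If n = 2^a with a ≥ 1, then w(n) ≡ 2⌊a/2⌋ + 1 (mod 8). -/
theorem stmt9 (w : ℕ → ℤ)
    (hw : ∀ n : ℕ, w n = ∑' i : ℕ, PowerSeries.coeff n (Wseries (i + 2)))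
    (a : ℕ) (ha : 1 ≤ a) :
    w (2 ^ a) ≡ 2 * ((a / 2 : ℕ) : ℤ) + 1 [ZMOD 8] := by
  rw [hw, tsum_eq_sum (s := range a) fun k hk ↦ coeff_Wseries_eq_zero_of_lt
    (Nat.pow_lt_pow_right one_lt_two (by simpa using hk))]
  have hterm : ∀ k ∈ range a, coeff (2 ^ a) (Wseries (k + 2)) ≡
      if a - (k + 1) = 0 then 1 else 2 * (((k + 1) % 2 : ℕ) : ℤ) [ZMOD 8] := fun k hk ↦ by
    have h := (Wseq_coeff_two_pow_modEq (k + 1) (a - (k + 1))).2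
    rwa [Nat.add_sub_cancel' (mem_range.1 hk)] at h
  obtain ⟨n, rfl⟩ : ∃ n, a = n + 1 := ⟨a - 1, by omega⟩
  have hvalues : ∑ k ∈ range (n + 1), (if n + 1 - (k + 1) = 0 then 1 else
      2 * (((k + 1) % 2 : ℕ) : ℤ)) = 2 * ((n + 1) / 2 : ℕ) + 1 := by
    rw [sum_range_succ, if_pos (Nat.sub_self _), ← Nat.sum_range_succ_mod_two, Nat.cast_sum,
      mul_sum]
    congr 1
    exact sum_congr rfl fun k hk ↦ if_neg (by simp at hk; omega)
  exact hvalues ▸ Int.ModEq.sum hterm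
end

section
/- Let u(n) be defined by Σ_{n≥1} u(n)q^n = 2·Σ_{i≥1} q^{2^i−1}(1+q^{2^{i−1}})·Π_{j=0}^{i−2} 1/(1−q^{2^j}), and w(n) by Σ_{n≥2} w(n)q^n = Σ_{i≥2} q^{2^{i−1}}(1+q^{2^{i−2}}) / ((1−q)·Π_{j=0}^{i−3}(1−q^{2^j})). Then 2w(n) = u(2n) = u(2n−1) for all n ≥ 2. -/
/-!
Write `E` for the substitution `q ↦ q²`. The `i`-th summand of the `w`-series becomes, after `E`,
`q^{2^i} (1 + q^{2^{i-1}}) / ((1 - q²) ∏_{j<i-2} (1 - q^{2^{j+1}}))`, and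
`(1 + q)(1 - q²)⁻¹ ∏_{j<i-2} (1 - q^{2^{j+1}})⁻¹ = ∏_{j<i-1} (1 - q^{2^j})⁻¹`, so
`q · (i-th summand of the u-series) = (1 + q) · E (2 · i-th summand of the w-series)`.
Since `E` only has even coefficients, comparing the coefficients of `q^{2n+1}` and `q^{2n}` gives
`u(2n) = 2 w(n) = u(2n - 1)` summand by summand; the extra first summand `2q + 2q²` of the
`u`-series does not reach degree `3`.
-/

open PowerSeries Finset

section CommRing

variable {R : Type*} [CommRing R]

theorem coeff_of_X_mul_eq_one_add_X_mul_expand {f g : R⟦X⟧}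
    (h : X * f = (1 + X) * expand 2 two_ne_zero g) (n : ℕ) :
    coeff (2 * n) f = coeff n g ∧ coeff (2 * n + 1) f = coeff (n + 1) g := by
  have hf : ∀ m, coeff m f =
      coeff (m + 1) (expand 2 two_ne_zero g) + coeff m (expand 2 two_ne_zero g) := fun m => by
    rw [← coeff_succ_X_mul, h, add_mul, one_mul, map_add, coeff_succ_X_mul]
  constructor
  · rw [hf, coeff_expand_of_not_dvd _ _ _ (by omega), coeff_expand_mul, zero_add]
  · rw [hf, show 2 * n + 1 + 1 = 2 * (n + 1) by ring, coeff_expand_mul,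
      coeff_expand_of_not_dvd _ _ _ (by omega), add_zero]

theorem expand_two_X_pow_two_pow (j : ℕ) :
    expand 2 two_ne_zero (X ^ 2 ^ j : R⟦X⟧) = X ^ 2 ^ (j + 1) := by
  rw [map_pow, expand_X, ← pow_mul, ← pow_succ']

theorem prod_invOfUnit_mul_prod {ι : Type*} (s : Finset ι) (φ : ι → R⟦X⟧)
    (hφ : ∀ i ∈ s, constantCoeff (φ i) = 1) :
    (∏ i ∈ s, (φ i).invOfUnit 1) * ∏ i ∈ s, φ i = 1 := by
  rw [← prod_mul_distrib]
  exact prod_eq_one fun i hi => invOfUnit_mul _ _ (by simp [hφ i hi])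

end CommRing

theorem X_mul_Useries_add_two (i : ℕ) :
    X * Useries (i + 2) = (1 + X) * expand 2 two_ne_zero (2 * Wseries (i + 2)) := by
  set A : ℤ⟦X⟧ := ∏ j ∈ range (i + 1), (1 - X ^ 2 ^ j)
  set B : ℤ⟦X⟧ := (1 - X) * ∏ j ∈ range i, (1 - X ^ 2 ^ j)
  have hA : A ≠ 0 := fun h => by simpa [A, map_prod] using congrArg constantCoeff h
  have hAB : (1 + X) * A = expand 2 two_ne_zero B := by
    simp only [A, B, prod_range_succ', map_mul, map_sub, map_one, map_prod,
      expand_X, expand_two_X_pow_two_pow, pow_zero, pow_one]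
    ring
  have hB : expand 2 two_ne_zero (B.invOfUnit 1) * expand 2 two_ne_zero B = 1 := by
    rw [← map_mul, invOfUnit_mul _ _ (by simp [B]), map_one]
  have hX : X * X ^ (2 ^ (i + 2) - 1) = (X ^ 2 ^ (i + 2) : ℤ⟦X⟧) := by
    rw [← pow_succ']
    congr 1
    have := Nat.one_le_two_pow (n := i + 2)
    omega
  apply mul_right_cancel₀ hA
  calc X * Useries (i + 2) * A
      = 2 * (X * X ^ (2 ^ (i + 2) - 1)) * (1 + X ^ 2 ^ (i + 1)) *
          ((∏ j ∈ range (i + 1), (1 - X ^ 2 ^ j : ℤ⟦X⟧).invOfUnit 1) * A) := by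
        rw [Useries, show i + 2 - 1 = i + 1 from rfl]; ring
    _ = 2 * X ^ 2 ^ (i + 2) * (1 + X ^ 2 ^ (i + 1)) *
          (expand 2 two_ne_zero (B.invOfUnit 1) * expand 2 two_ne_zero B) := by
        rw [hX, prod_invOfUnit_mul_prod _ _ fun j _ => by simp, hB]
    _ = (1 + X) * expand 2 two_ne_zero (2 * Wseries (i + 2)) * A := by
        rw [← hAB, Wseries, show i + 2 - 1 = i + 1 from rfl, show i + 2 - 2 = i from rfl]
        simp only [map_mul, map_add, map_one, map_ofNat,
          expand_two_X_pow_two_pow]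
        ring

theorem coeff_Useries_one_of_three_le {m : ℕ} (hm : 3 ≤ m) : coeff m (Useries 1) = 0 := by
  have : Useries 1 = C 2 * X + C 2 * X ^ 2 := by
    simp only [Useries, pow_one, Nat.add_one_sub_one, tsub_self, pow_zero, range_zero, prod_empty,
      mul_one, eq_intCast, Int.cast_ofNat]
    ring
  rw [this, map_add, coeff_C_mul, coeff_C_mul, coeff_X, coeff_X_pow, if_neg (by omega),
    if_neg (by omega), mul_zero, add_zero]

theorem coeff_Wseries_add_two_of_lt {i m : ℕ} (hm : m < 2 ^ (i + 1)) :
    coeff m (Wseries (i + 2)) = 0 := by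
  rw [Wseries, show i + 2 - 1 = i + 1 from rfl, mul_assoc, coeff_X_pow_mul', if_neg (by omega)]

theorem summable_coeff_Wseries_add_two (n : ℕ) : Summable fun i => coeff n (Wseries (i + 2)) := by
  refine summable_of_ne_finset_zero (s := range n) fun i hi => coeff_Wseries_add_two_of_lt ?_
  have hn : n < 2 ^ n := Nat.lt_two_pow_self
  have hi : 2 ^ n ≤ 2 ^ (i + 1) := Nat.pow_le_pow_right two_pos (by rw [mem_range, not_lt] at hi; omega)
  omega

theorem tsum_coeff_Useries_eq_two_mul {m n : ℕ} (hm : 3 ≤ m)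
    (h : ∀ i, coeff m (Useries (i + 2)) = coeff n (2 * Wseries (i + 2))) :
    ∑' i, coeff m (Useries (i + 1)) = 2 * ∑' i, coeff n (Wseries (i + 2)) := by
  have h' : ∀ i, coeff m (Useries (i + 2)) = 2 * coeff n (Wseries (i + 2)) := fun i => by
    rw [h, ← map_ofNat C 2, coeff_C_mul]
  have hs := summable_coeff_Wseries_add_two n
  rw [tsum_eq_zero_add' (by simpa only [h'] using hs.mul_left 2), coeff_Useries_one_of_three_le hm,
    zero_add, tsum_congr h', hs.tsum_mul_left]

/-- 2w(n) = u(2n) = u(2n−1) for all n ≥ 2. -/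
theorem stmt17 (u w : ℕ → ℤ)
    (hu : ∀ n : ℕ, u n = ∑' i : ℕ, PowerSeries.coeff n (Useries (i + 1)))
    (hw : ∀ n : ℕ, w n = ∑' i : ℕ, PowerSeries.coeff n (Wseries (i + 2))) :
    ∀ n, 2 ≤ n → 2 * w n = u (2 * n) ∧ u (2 * n) = u (2 * n - 1) := by
  intro n hn
  obtain ⟨k, rfl⟩ : ∃ k, n = k + 1 := ⟨n - 1, by omega⟩
  have hcoeff i := coeff_of_X_mul_eq_one_add_X_mul_expand (X_mul_Useries_add_two i)
  have heven : u (2 * (k + 1)) = 2 * w (k + 1) := by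
    rw [hu, hw]
    exact tsum_coeff_Useries_eq_two_mul (by omega) fun i => (hcoeff i (k + 1)).1
  have hodd : u (2 * (k + 1) - 1) = 2 * w (k + 1) := by
    rw [show 2 * (k + 1) - 1 = 2 * k + 1 by omega, hu, hw]
    exact tsum_coeff_Useries_eq_two_mul (by omega) fun i => (hcoeff i k).2
  exact ⟨heven.symm, heven.trans hodd.symm⟩
end
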